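/- Let q ≥ 1. The map B restricted to the open unit cube (−1,1)^q is a bijection onto the invertible region D_θ. -/

import Mathlib

/-- Forward recursion for the Barndorff-Nielsen–Schou / Monahan transformation:
`fwdRow ζ k i = θ_{i,k}` (1-based), with `θ_{k,k} = ζ_k` and
`θ_{i,k} = θ_{i,k-1} - ζ_k * θ_{k-i,k-1}` for `1 ≤ i ≤ k-1`. -/
noncomputable def fwdRow (ζ : ℕ → ℝ) : ℕ → ℕ → ℝ
  | 0 => fun _ => 0
  | (k+1) => fun i =>
      if i = k + 1 then ζ (k + 1)
      else fwdRow ζ k i - ζ (k + 1) * fwdRow ζ k (k + 1 - i)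

open Classical in
/-- Reverse recursion: `(invAux q θ d).1` is row `q - d` (i.e. `θ_{·, q-d}`), and
`(invAux q θ d).2` is the proposition that `|θ_{j,j}| < 1` for all `j` with `q - d ≤ j ≤ q`.
Row `q-(d+1)` is given by `θ_{i,k-1} = (θ_{i,k} + θ_{k,k} θ_{k-i,k})/(1-θ_{k,k}^2)` with
`k = q - d` when the diagonal condition holds at all levels `≥ k`, and is `0` otherwise. -/
noncomputable def invAux (q : ℕ) (θ : ℕ → ℝ) : ℕ → (ℕ → ℝ) × Prop
  | 0 => (θ, |θ q| < 1)
  | (d+1) =>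
      let p := invAux q θ d
      let row : ℕ → ℝ := fun i =>
        if p.2 then (p.1 i + p.1 (q - d) * p.1 (q - d - i)) / (1 - (p.1 (q - d)) ^ 2)
        else 0
      (row, p.2 ∧ |row (q - d - 1)| < 1)

/-- Interpret a vector in `ℝ^q` as a 1-based sequence `ℕ → ℝ` (value `0` out of range). -/
def toSeq {q : ℕ} (v : Fin q → ℝ) : ℕ → ℝ :=
  fun n => if h : n - 1 < q then v ⟨n - 1, h⟩ else 0

/-- The map `B : ℝ^q → ℝ^q`, `B(ζ)_i = θ_{i,q}`. -/
noncomputable def Bmap {q : ℕ} (ζ : Fin q → ℝ) : Fin q → ℝ :=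
  fun i => fwdRow (toSeq ζ) q (i.1 + 1)

/-- The map `B⁻ : ℝ^q → ℝ^q`, `B⁻(θ)_i = θ_{i,i}` computed by the reverse recursion. -/
noncomputable def Binv {q : ℕ} (θ : Fin q → ℝ) : Fin q → ℝ :=
  fun i => (invAux q (toSeq θ) (q - (i.1 + 1))).1 (i.1 + 1)

/-- The invertible region `D_θ ⊆ ℝ^q`: all complex roots of
`θ(z) = 1 - θ_1 z - ⋯ - θ_q z^q` satisfy `|z| > 1`. -/
def invRegion (q : ℕ) : Set (Fin q → ℝ) :=
  {θ | ∀ z : ℂ, 1 - ∑ i : Fin q, (θ i : ℂ) * z ^ (i.1 + 1) = 0 → 1 < ‖z‖}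

/-- The open unit cube `D_ζ = (-1,1)^q ⊆ ℝ^q`. -/
def openCube (q : ℕ) : Set (Fin q → ℝ) :=
  {ζ | ∀ i, ζ i ∈ Set.Ioo (-1 : ℝ) 1}

/-!
Write `θ_k(z) = 1 - ∑_{i ≤ k} θ_{i,k} z^i` and `θ_k^*(z) = z^k θ_k(1/z)`. One step of the
recursion is the Schur–Cohn step `θ_{k+1} = θ_k - ζ_{k+1} z θ_k^*`,
`θ_{k+1}^* = z θ_k^* - ζ_{k+1} θ_k`. On the unit circle `|θ_k^*| = |θ_k|`, so when `θ_k` has no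
zero in the closed unit disc the maximum modulus principle gives `|θ_k^*| ≤ |θ_k|` there. Hence,
for `|ζ_{k+1}| < 1`, `θ_{k+1}` has no zero in the closed disc iff `θ_k` has none. Conversely, by
Vieta, a polynomial `1 - ∑_{i ≤ k} θ_i z^i` without zeros in the closed disc has `|θ_k| < 1`, so
the step can be inverted. Induction on `k` gives the bijection.
-/

open Polynomial Finset

noncomputable def maPoly (a : ℕ → ℝ) (k : ℕ) : ℂ[X] :=
  1 - ∑ i ∈ range k, C (a (i + 1) : ℂ) * X ^ (i + 1)

noncomputable def maPolyRev (a : ℕ → ℝ) (k : ℕ) : ℂ[X] :=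
  X ^ k - ∑ i ∈ range k, C (a (k - i) : ℂ) * X ^ i

def IsInvertibleMA (a : ℕ → ℝ) (k : ℕ) : Prop :=
  ∀ z : ℂ, ‖z‖ ≤ 1 → (maPoly a k).eval z ≠ 0

-- `b` is row `k + 1` of the recursion computed from row `a`, with `ζ_{k+1} = b (k + 1)`.
def IsSchurStep (a b : ℕ → ℝ) (k : ℕ) : Prop :=
  ∀ i ∈ Set.Icc 1 k, b i = a i - b (k + 1) * a (k + 1 - i)

section
variable {a a' b b' : ℕ → ℝ} {k : ℕ}

lemma maPoly_congr (h : Set.EqOn a b (Set.Icc 1 k)) : maPoly a k = maPoly b k := by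
  unfold maPoly
  congr 1
  refine sum_congr rfl fun i hi => ?_
  rw [h ⟨by omega, mem_range.mp hi⟩]

lemma isInvertibleMA_zero (a : ℕ → ℝ) : IsInvertibleMA a 0 := by
  simp [IsInvertibleMA, maPoly]

lemma IsSchurStep.maPoly_succ (h : IsSchurStep a b k) :
    maPoly b (k + 1) = maPoly a k - C (b (k + 1) : ℂ) * X * maPolyRev a k := by
  have hb : ∀ i ∈ range k, C (b (i + 1) : ℂ) * X ^ (i + 1) =
      C (a (i + 1) : ℂ) * X ^ (i + 1) - C (b (k + 1) : ℂ) * X * (C (a (k - i) : ℂ) * X ^ i) := by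
    intro i hi
    rw [h (i + 1) ⟨by omega, mem_range.mp hi⟩, show k + 1 - (i + 1) = k - i by omega]
    simp only [Complex.ofReal_sub, Complex.ofReal_mul, C_sub, C_mul]
    ring
  rw [maPoly, sum_range_succ, sum_congr rfl hb, sum_sub_distrib, ← mul_sum, maPoly, maPolyRev]
  ring

lemma IsSchurStep.maPolyRev_succ (h : IsSchurStep a b k) :
    maPolyRev b (k + 1) = X * maPolyRev a k - C (b (k + 1) : ℂ) * maPoly a k := by
  have hb : ∀ i ∈ range k, C (b (k + 1 - (i + 1)) : ℂ) * X ^ (i + 1) =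
      X * (C (a (k - i) : ℂ) * X ^ i) - C (b (k + 1) : ℂ) * (C (a (i + 1) : ℂ) * X ^ (i + 1)) := by
    intro i hi
    have hik : i < k := mem_range.mp hi
    rw [h (k + 1 - (i + 1)) ⟨by omega, by omega⟩,
      show k + 1 - (k + 1 - (i + 1)) = i + 1 by omega, show k + 1 - (i + 1) = k - i by omega]
    simp only [Complex.ofReal_sub, Complex.ofReal_mul, C_sub, C_mul]
    ring
  rw [maPolyRev, sum_range_succ', sum_congr rfl hb, sum_sub_distrib, ← mul_sum, ← mul_sum,
    maPoly, maPolyRev]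
  simp only [Nat.sub_zero, pow_zero, mul_one]
  ring

lemma eval_maPolyRev {z : ℂ} (hz : z ≠ 0) :
    (maPolyRev a k).eval z = z ^ k * (maPoly a k).eval z⁻¹ := by
  simp only [maPoly, maPolyRev, eval_sub, eval_one, eval_finsetSum, eval_mul, eval_C, eval_pow,
    eval_X, mul_sub, mul_one, mul_sum]
  congr 1
  rw [← sum_range_reflect]
  refine sum_congr rfl fun i hi => ?_
  obtain ⟨j, rfl⟩ : ∃ j, k = i + 1 + j := ⟨k - (i + 1), by have := mem_range.mp hi; omega⟩
  rw [show i + 1 + j - (i + 1 + j - 1 - i) = i + 1 by omega,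
    show i + 1 + j - 1 - i = j by omega, pow_add, inv_pow]
  field_simp

lemma eval_conj_maPoly (z : ℂ) :
    (maPoly a k).eval (starRingEnd ℂ z) = starRingEnd ℂ ((maPoly a k).eval z) := by
  simp [maPoly, eval_finsetSum]

lemma norm_eval_maPolyRev_of_norm_eq_one {z : ℂ} (hz : ‖z‖ = 1) :
    ‖(maPolyRev a k).eval z‖ = ‖(maPoly a k).eval z‖ := by
  have hz0 : z ≠ 0 := norm_ne_zero_iff.mp (by rw [hz]; exact one_ne_zero)
  rw [eval_maPolyRev hz0, Complex.inv_eq_conj hz, eval_conj_maPoly, norm_mul, norm_pow, hz,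
    one_pow, one_mul, Complex.norm_conj]

lemma natDegree_maPoly_le : (maPoly a k).natDegree ≤ k := by
  unfold maPoly
  refine (natDegree_sub_le _ _).trans (max_le (by simp) ?_)
  refine natDegree_sum_le_of_forall_le _ _ fun i hi => (natDegree_C_mul_X_pow_le _ _).trans ?_
  exact mem_range.mp hi

lemma coeff_maPoly_self (hk : k ≠ 0) : (maPoly a k).coeff k = -a k := by
  obtain ⟨j, rfl⟩ := Nat.exists_eq_succ_of_ne_zero hk
  simp [maPoly, coeff_X_pow, coeff_one]

lemma IsInvertibleMA.abs_lt_one (h : IsInvertibleMA a k) (hk : k ≠ 0) : |a k| < 1 := by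
  rcases eq_or_ne (a k) 0 with hak | hak
  · simp [hak]
  set P := maPoly a k
  have hcoeff : P.coeff k = -a k := coeff_maPoly_self hk
  have hdeg : P.natDegree = k :=
    natDegree_eq_of_le_of_coeff_ne_zero natDegree_maPoly_le (by simpa [hcoeff])
  have hroots : P.roots ≠ 0 := by
    rw [← Multiset.card_pos, IsAlgClosed.card_roots_eq_natDegree, hdeg]
    omega
  have hroots_norm : ∀ r ∈ P.roots, 1 < ‖r‖ := fun r hr =>
    not_le.mp fun hr1 => h r hr1 (mem_roots'.mp hr).2
  -- Vieta: `P 0 = 1` is `±a_k` times the product of the roots, all of norm `> 1`.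
  have hvieta : 1 = |a k| * (P.roots.map norm).prod := by
    have := congrArg norm (IsAlgClosed.splits P).coeff_zero_eq_leadingCoeff_mul_prod_roots
    have hP0 : P.coeff 0 = 1 := by simp [P, maPoly]
    have hnorm_prod : ‖P.roots.prod‖ = (P.roots.map norm).prod := by
      simpa using map_multiset_prod (normHom : ℂ →*₀ ℝ) P.roots
    rw [hP0, leadingCoeff, hdeg, hcoeff, norm_mul, norm_mul, hnorm_prod] at this
    simpa using this
  have hprod : 1 < (P.roots.map norm).prod := by
    simpa using Multiset.prod_map_lt_prod_map hroots (fun _ => 1) norm (by simp) hroots_norm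
  nlinarith [abs_pos.mpr hak]

lemma IsInvertibleMA.norm_eval_maPolyRev_le (h : IsInvertibleMA a k) {z : ℂ} (hz : ‖z‖ ≤ 1) :
    ‖(maPolyRev a k).eval z‖ ≤ ‖(maPoly a k).eval z‖ := by
  have hf : DifferentiableOn ℂ (fun w => (maPolyRev a k).eval w / (maPoly a k).eval w)
      (Metric.closedBall 0 1) :=
    (maPolyRev a k).differentiable.differentiableOn.div
      (maPoly a k).differentiable.differentiableOn fun w hw => h w (by simpa using hw)
  have hquot : ‖(maPolyRev a k).eval z / (maPoly a k).eval z‖ ≤ 1 := by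
    refine Complex.norm_le_of_forall_mem_frontier_norm_le Metric.isBounded_ball
      (hf.diffContOnCl_ball subset_rfl) (fun w hw => ?_)
      (by rwa [closure_ball _ one_ne_zero, mem_closedBall_zero_iff])
    rw [frontier_ball _ one_ne_zero, mem_sphere_zero_iff_norm] at hw
    rw [norm_div, norm_eval_maPolyRev_of_norm_eq_one hw]
    exact div_self_le_one _
  rwa [norm_div, div_le_one (norm_pos_iff.mpr (h z hz))] at hquot

lemma IsSchurStep.isInvertibleMA_succ_iff (h : IsSchurStep a b k) :
    IsInvertibleMA b (k + 1) ↔ IsInvertibleMA a k ∧ |b (k + 1)| < 1 := by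
  set s := b (k + 1)
  have hE (z : ℂ) := congrArg (eval z) h.maPoly_succ
  have hR (z : ℂ) := congrArg (eval z) h.maPolyRev_succ
  simp only [eval_sub, eval_mul, eval_C, eval_X] at hE hR
  constructor
  · intro hb
    have hs := hb.abs_lt_one k.succ_ne_zero
    refine ⟨fun z hz hEa => ?_, hs⟩
    have hEb : (maPoly b (k + 1)).eval z = -s * (maPolyRev b (k + 1)).eval z := by
      rw [hE, hR, hEa]; ring
    have hnorm : ‖(maPoly b (k + 1)).eval z‖ = |s| * ‖(maPolyRev b (k + 1)).eval z‖ := by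
      rw [hEb, norm_mul, norm_neg, Complex.norm_real, Real.norm_eq_abs]
    have hle := hb.norm_eval_maPolyRev_le hz
    have hpos := norm_pos_iff.mpr (hb z hz)
    nlinarith [abs_nonneg s]
  · rintro ⟨ha, hs⟩ z hz hEb
    rw [hE, sub_eq_zero] at hEb
    have hpos := norm_pos_iff.mpr (ha z hz)
    refine lt_irrefl ‖(maPoly a k).eval z‖ ?_
    calc ‖(maPoly a k).eval z‖ = |s| * (‖z‖ * ‖(maPolyRev a k).eval z‖) := by
          rw [hEb, norm_mul, norm_mul, Complex.norm_real, Real.norm_eq_abs, mul_assoc]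
      _ ≤ |s| * (1 * ‖(maPoly a k).eval z‖) := by
          gcongr
          exact ha.norm_eval_maPolyRev_le hz
      _ < ‖(maPoly a k).eval z‖ := by
          rw [one_mul]
          exact mul_lt_of_lt_one_left hpos hs

lemma IsSchurStep.eqOn (ha : IsSchurStep a b k) (ha' : IsSchurStep a' b' k)
    (hb : Set.EqOn b b' (Set.Icc 1 (k + 1))) (hs : |b (k + 1)| < 1) :
    Set.EqOn a a' (Set.Icc 1 k) := by
  rintro i ⟨hi1, hik⟩
  have hj : k + 1 - i ∈ Set.Icc 1 k := ⟨by omega, by omega⟩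
  have e1 := ha i ⟨hi1, hik⟩
  have e2 := ha' i ⟨hi1, hik⟩
  have e3 := ha _ hj
  have e4 := ha' _ hj
  rw [show k + 1 - (k + 1 - i) = i by omega] at e3 e4
  rw [← hb ⟨hi1, by omega⟩, ← hb ⟨by omega, le_rfl⟩] at e2
  rw [← hb ⟨by omega, by omega⟩, ← hb ⟨by omega, le_rfl⟩] at e4
  -- the differences `d_i = a_i - a'_i` satisfy `d_i = s d_{k+1-i}` and `d_{k+1-i} = s d_i`
  have hd : (a i - a' i) * (1 - b (k + 1) ^ 2) = 0 := by
    linear_combination (-1 : ℝ) * e1 + e2 - b (k + 1) * e3 + b (k + 1) * e4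
  have hs2 : 1 - b (k + 1) ^ 2 ≠ 0 := by
    have := (sq_lt_one_iff_abs_lt_one _).mpr hs; linarith
  exact sub_eq_zero.mp ((mul_eq_zero.mp hd).resolve_right hs2)

lemma exists_isSchurStep (hs : |b (k + 1)| < 1) : ∃ a, IsSchurStep a b k := by
  have hs2 : 1 - b (k + 1) ^ 2 ≠ 0 := by
    have := (sq_lt_one_iff_abs_lt_one _).mpr hs; linarith
  refine ⟨fun i => (b i + b (k + 1) * b (k + 1 - i)) / (1 - b (k + 1) ^ 2),
    fun i ⟨hi1, hik⟩ => ?_⟩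
  simp only [show k + 1 - (k + 1 - i) = i by omega]
  field_simp
  ring

end

lemma fwdRow_succ_self (ζ : ℕ → ℝ) (k : ℕ) : fwdRow ζ (k + 1) (k + 1) = ζ (k + 1) := by
  simp [fwdRow]

lemma isSchurStep_fwdRow (ζ : ℕ → ℝ) (k : ℕ) : IsSchurStep (fwdRow ζ k) (fwdRow ζ (k + 1)) k := by
  rintro i ⟨-, hik⟩
  rw [fwdRow_succ_self]
  exact if_neg (by omega)

lemma fwdRow_congr {ζ ζ' : ℕ → ℝ} {k : ℕ} (h : Set.EqOn ζ ζ' (Set.Icc 1 k)) :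
    fwdRow ζ k = fwdRow ζ' k := by
  induction k with
  | zero => rfl
  | succ k ih =>
    rw [← Set.insert_Icc_right_eq_Icc_add_one (Nat.le_add_left 1 k)] at h
    funext i
    simp only [fwdRow, ih (h.mono (Set.subset_insert _ _)), h (Set.mem_insert _ _)]

lemma isInvertibleMA_fwdRow_iff {ζ : ℕ → ℝ} {k : ℕ} :
    IsInvertibleMA (fwdRow ζ k) k ↔ ∀ i ∈ Set.Icc 1 k, |ζ i| < 1 := by
  induction k with
  | zero => simp [isInvertibleMA_zero]
  | succ k ih =>
    rw [(isSchurStep_fwdRow ζ k).isInvertibleMA_succ_iff, ih, fwdRow_succ_self,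
      ← Set.insert_Icc_right_eq_Icc_add_one (Nat.le_add_left 1 k), Set.forall_mem_insert, and_comm]

lemma eqOn_of_fwdRow_eqOn {ζ ζ' : ℕ → ℝ} {k : ℕ} (hζ : ∀ i ∈ Set.Icc 1 k, |ζ i| < 1)
    (h : Set.EqOn (fwdRow ζ k) (fwdRow ζ' k) (Set.Icc 1 k)) : Set.EqOn ζ ζ' (Set.Icc 1 k) := by
  induction k with
  | zero => simp
  | succ k ih =>
    have hlast : ζ (k + 1) = ζ' (k + 1) := by
      simpa only [fwdRow_succ_self] using h ⟨Nat.le_add_left 1 k, le_rfl⟩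
    rw [← Set.insert_Icc_right_eq_Icc_add_one (Nat.le_add_left 1 k), Set.forall_mem_insert] at hζ
    have hrow := (isSchurStep_fwdRow ζ k).eqOn (isSchurStep_fwdRow ζ' k) h
      (by rw [fwdRow_succ_self]; exact hζ.1)
    rw [← Set.insert_Icc_right_eq_Icc_add_one (Nat.le_add_left 1 k)]
    rintro i (rfl | hi)
    exacts [hlast, ih hζ.2 hrow hi]

lemma exists_fwdRow_eqOn {b : ℕ → ℝ} {k : ℕ} (h : IsInvertibleMA b k) :
    ∃ ζ, Set.EqOn (fwdRow ζ k) b (Set.Icc 1 k) := by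
  induction k generalizing b with
  | zero => exact ⟨0, by simp⟩
  | succ k ih =>
    obtain ⟨a, ha⟩ := exists_isSchurStep (h.abs_lt_one k.succ_ne_zero)
    obtain ⟨ζ, hζ⟩ := ih (ha.isInvertibleMA_succ_iff.mp h).1
    set ζ' := Function.update ζ (k + 1) (b (k + 1))
    have hrow : fwdRow ζ' k = fwdRow ζ k :=
      fwdRow_congr fun i hi => Function.update_of_ne (Nat.lt_succ_of_le hi.2).ne _ _
    have hlast : ζ' (k + 1) = b (k + 1) := Function.update_self _ _ _
    refine ⟨ζ', ?_⟩
    rw [← Set.insert_Icc_right_eq_Icc_add_one (Nat.le_add_left 1 k)]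
    rintro i (rfl | ⟨hi1, hik⟩)
    · rw [fwdRow_succ_self, hlast]
    · rw [isSchurStep_fwdRow ζ' k i ⟨hi1, hik⟩, fwdRow_succ_self, hlast, hrow,
        hζ ⟨hi1, hik⟩, hζ ⟨by omega, by omega⟩, ha i ⟨hi1, hik⟩]

section
variable {q : ℕ}

lemma toSeq_apply (v : Fin q → ℝ) {n : ℕ} (hn : n ∈ Set.Icc 1 q) :
    toSeq v n = v ⟨n - 1, Nat.sub_one_lt_of_le hn.1 hn.2⟩ :=
  dif_pos _

@[simp]
lemma toSeq_succ (v : Fin q → ℝ) (i : Fin q) : toSeq v (i + 1) = v i := by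
  simp [toSeq]

lemma eq_of_eqOn_toSeq {v w : Fin q → ℝ} (h : Set.EqOn (toSeq v) (toSeq w) (Set.Icc 1 q)) :
    v = w :=
  funext fun i => by simpa using h ⟨Nat.le_add_left 1 i, i.2⟩

lemma eval_maPoly_toSeq (θ : Fin q → ℝ) (z : ℂ) :
    (maPoly (toSeq θ) q).eval z = 1 - ∑ i : Fin q, (θ i : ℂ) * z ^ (i.1 + 1) := by
  simp [maPoly, eval_finsetSum, ← Fin.sum_univ_eq_sum_range]

lemma mem_invRegion_iff {θ : Fin q → ℝ} : θ ∈ invRegion q ↔ IsInvertibleMA (toSeq θ) q := by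
  simp only [invRegion, IsInvertibleMA, eval_maPoly_toSeq, Set.mem_ofPred_eq]
  exact forall_congr' fun z => by rw [imp_not_comm, not_le]

lemma mem_openCube_iff {ζ : Fin q → ℝ} :
    ζ ∈ openCube q ↔ ∀ n ∈ Set.Icc 1 q, |toSeq ζ n| < 1 := by
  refine ⟨fun h n hn => ?_, fun h i => ?_⟩
  · rw [toSeq_apply ζ hn, abs_lt]
    exact h _
  · simpa [abs_lt] using h (i + 1) ⟨Nat.le_add_left 1 i, i.2⟩

lemma eqOn_toSeq_bmap (ζ : Fin q → ℝ) :
    Set.EqOn (toSeq (Bmap ζ)) (fwdRow (toSeq ζ) q) (Set.Icc 1 q) := by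
  intro n hn
  rw [toSeq_apply _ hn, Bmap, Nat.sub_add_cancel hn.1]

lemma bmap_mem_invRegion_iff {ζ : Fin q → ℝ} : Bmap ζ ∈ invRegion q ↔ ζ ∈ openCube q := by
  rw [mem_invRegion_iff, IsInvertibleMA, maPoly_congr (eqOn_toSeq_bmap ζ), ← IsInvertibleMA,
    isInvertibleMA_fwdRow_iff, mem_openCube_iff]

lemma injOn_bmap : Set.InjOn Bmap (openCube q) := fun ζ hζ ζ' _ h =>
  eq_of_eqOn_toSeq <| eqOn_of_fwdRow_eqOn (mem_openCube_iff.mp hζ) <|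
    (eqOn_toSeq_bmap ζ).symm.trans (h ▸ eqOn_toSeq_bmap ζ')

lemma surjOn_bmap : Set.SurjOn Bmap (openCube q) (invRegion q) := by
  intro θ hθ
  obtain ⟨ζ, hζ⟩ := exists_fwdRow_eqOn (mem_invRegion_iff.mp hθ)
  let v : Fin q → ℝ := fun i => ζ (i + 1)
  have hv : Set.EqOn (toSeq v) ζ (Set.Icc 1 q) := fun n hn => by
    rw [toSeq_apply v hn]
    exact congrArg ζ (Nat.sub_add_cancel hn.1)
  have hBv : Bmap v = θ :=
    eq_of_eqOn_toSeq <| (eqOn_toSeq_bmap v).trans <| by rwa [fwdRow_congr hv]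
  exact ⟨v, bmap_mem_invRegion_iff.mp (hBv ▸ hθ), hBv⟩

end

theorem bijOn_openCube_general {q : ℕ} :
    Set.BijOn Bmap (openCube q) (invRegion q) :=
  ⟨fun _ => bmap_mem_invRegion_iff.mpr, injOn_bmap, surjOn_bmap⟩

/-- For `q ≥ 1`, `B` restricted to the open unit cube `(-1,1)^q` is a bijection onto the
invertible region `D_θ`. -/
theorem bijOn_openCube {q : ℕ} (hq : 1 ≤ q) :
    Set.BijOn Bmap (openCube q) (invRegion q) :=
  bijOn_openCube_general
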